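/- Let A be an elementary abelian finite p-group and let 1 ≤ i ≤ p−1. Then the map γ_i*(W(A))/γ_{i+1}*(W(A)) → γ_{i+1}*(W(A))/γ_{i+2}*(W(A)) sending the coset of a ∈ γ_i*(W(A)) to the coset of Δ(a) is a well-defined group isomorphism. -/

import Mathlib

open Pointwise

namespace GGS
noncomputable section

variable (p : ℕ)

def shiftAut (G : Type*) [Group G] : Multiplicative (ZMod p) →* MulAut (ZMod p → G) :=
  MonoidHom.mk'
    (fun k =>
      { toFun := fun g i => g (i + Multiplicative.toAdd k)
        invFun := fun g i => g (i - Multiplicative.toAdd k)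
        left_inv := fun g => by funext i; simp
        right_inv := fun g => by funext i; simp
        map_mul' := fun g h => rfl })
    (fun k l => by
      apply MulEquiv.ext
      intro g
      funext i
      show g (i + Multiplicative.toAdd (k * l)) = g (i + Multiplicative.toAdd k + Multiplicative.toAdd l)
      rw [toAdd_mul, add_assoc])

abbrev W (G : Type*) [Group G] :=
  SemidirectProduct (ZMod p → G) (Multiplicative (ZMod p)) (shiftAut p G)

def inlW (G : Type*) [Group G] : (ZMod p → G) →* W p G := SemidirectProduct.inl

def sigma (G : Type*) [Group G] : W p G := SemidirectProduct.inr (Multiplicative.ofAdd (1 : ZMod p))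

def baseW (G : Type*) [Group G] : Subgroup (W p G) := (inlW p G).range

/-- Δ(g) = [g,σ] = g⁻¹ σ⁻¹ g σ, read off in the base group. -/
def Delta (G : Type*) [Group G] (g : ZMod p → G) : ZMod p → G :=
  ((inlW p G g)⁻¹ * (sigma p G)⁻¹ * inlW p G g * sigma p G).left

/-- γ₁* = B(G), γ_{i+1}* = [γ_i*, W(G)]; here `gammaStar n` is γ_{n+1}*. -/
def gammaStar (G : Type*) [Group G] : ℕ → Subgroup (W p G)
  | 0 => baseW p G
  | (n + 1) => ⁅gammaStar G n, ⊤⁆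

def lamG (G : Type*) [Group G] (g : G) (i : ℕ) : ZMod p → G :=
  (Delta p G)^[i - 1] (fun t => if t = 0 then g else 1)

def BSub (G : Type*) [Group G] (H : Subgroup G) : Subgroup (W p G) :=
  Subgroup.map (inlW p G) (Subgroup.pi Set.univ fun _ => H)

def inlF (F : Type*) [AddGroup F] (v : ZMod p → F) : W p (Multiplicative F) :=
  inlW p (Multiplicative F) (fun i => Multiplicative.ofAdd (v i))

def DeltaF (F : Type*) [AddGroup F] (v : ZMod p → F) : ZMod p → F :=
  fun i => Multiplicative.toAdd (Delta p (Multiplicative F) (fun j => Multiplicative.ofAdd (v j)) i)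

def lamF (F : Type*) [AddGroup F] [One F] (i : ℕ) : ZMod p → F :=
  (DeltaF p F)^[i - 1] (fun j => if j = 0 then 1 else 0)

end
end GGS

open GGS

/-!
For abelian `A`, `Δ` is an endomorphism of `B(A)` commuting with the cyclic shifts, and by
induction `γ_{n+1}*(W(A))` is the image of `Δⁿ`: a commutator `[b, y]` with `b ∈ B(A)` is `b`
divided by a shift of `b`, and such a quotient telescopes into shifts of `Δ b`. Hence `Δ` maps
`γ_i*` onto `γ_{i+1}*`, and what remains is injectivity: if `Δ u ∈ Δ^{i+1}(B)`, then `u` differs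
from an element of `Δ^i(B)` by an element of `ker Δ`, i.e. by a constant. When `A` has exponent
`p`, every constant lies in `Δ^{p-1}(B) ⊆ Δ^i(B)`: modelling `Δ` as `τ - 1` for the shift `τ`,
the identity `(X - 1)^{p-1} = 1 + X + ⋯ + X^{p-1}` in `𝔽_p[X]` shows that `Δ^{p-1}` sends the
point mass `a` at `0` to the constant `a`.
-/

namespace GGS

open scoped commutatorElement

variable (p : ℕ)

lemma exists_monoidHom_ofAdd_one_eq {A : Type*} [CommGroup A] {a : A} (ha : a ^ p = 1) :
    ∃ χ : Multiplicative (ZMod p) →* A, χ (.ofAdd 1) = a := by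
  let f : {f : ℤ →+ Additive A // f p = 0} :=
    ⟨zmultiplesHom _ (.ofMul a), by simp [← ofMul_pow, ha]⟩
  have hf : ZMod.lift p f 1 = .ofMul a := by simpa [f] using ZMod.lift_coe p f 1
  exact ⟨AddMonoidHom.toMultiplicativeLeft (ZMod.lift p f), by simp [hf]⟩

section Group

variable {G H : Type*} [Group G] [Group H]

lemma shiftAut_apply (k : Multiplicative (ZMod p)) (g : ZMod p → G) (i : ZMod p) :
    shiftAut p G k g i = g (i + k.toAdd) := rfl

lemma shiftAut_symm_apply (k : Multiplicative (ZMod p)) (g : ZMod p → G) (i : ZMod p) :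
    (shiftAut p G k).symm g i = g (i - k.toAdd) := rfl

lemma delta_apply (g : ZMod p → G) (i : ZMod p) : Delta p G g i = (g i)⁻¹ * g (i - 1) := by
  simp [Delta, inlW, sigma, shiftAut_symm_apply]

lemma delta_map (f : G →* H) (g : ZMod p → G) : Delta p H (f ∘ g) = f ∘ Delta p G g := by
  funext i
  simp [delta_apply]

lemma delta_iterate_map (f : G →* H) (n : ℕ) (g : ZMod p → G) :
    (Delta p H)^[n] (f ∘ g) = f ∘ (Delta p G)^[n] g :=
  (Function.Semiconj.iterate_right (f := (f ∘ ·)) (fun g => (delta_map p f g).symm) n g).symm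

lemma delta_shiftAut (k : Multiplicative (ZMod p)) (g : ZMod p → G) :
    Delta p G (shiftAut p G k g) = shiftAut p G k (Delta p G g) := by
  funext i
  simp [delta_apply, shiftAut_apply, sub_add_eq_add_sub]

lemma inlW_delta (g : ZMod p → G) :
    inlW p G (Delta p G g) = ⁅(inlW p G g)⁻¹, (sigma p G)⁻¹⁆ := by
  rw [commutatorElement_def, inv_inv, inv_inv]
  ext
  · rfl
  · simp [inlW, sigma]

lemma eq_const_of_delta_eq_one [NeZero p] {g : ZMod p → G} (h : Delta p G g = 1) :
    g = fun _ => g 0 := by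
  have step (i : ZMod p) : g (i + 1) = g i := by
    simpa [delta_apply, inv_mul_eq_one] using congrFun h (i + 1)
  have nat (n : ℕ) : g n = g 0 := by
    induction n with
    | zero => simp
    | succ n ih => rw [Nat.cast_succ, step, ih]
  funext i
  rw [← ZMod.natCast_zmod_val i, nat]

end Group

section CommGroup

variable {A : Type*} [CommGroup A]

def deltaHom : (ZMod p → A) →* (ZMod p → A) :=
  MonoidHom.mk' (Delta p A) fun v w => by
    funext i
    simp only [delta_apply, Pi.mul_apply, mul_inv]
    ac_rfl

def deltaPow (n : ℕ) : (ZMod p → A) →* (ZMod p → A) where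
  toFun := (Delta p A)^[n]
  map_one' := iterate_map_one (deltaHom p) n
  map_mul' := iterate_map_mul (deltaHom p) n

lemma delta_mul (v w : ZMod p → A) : Delta p A (v * w) = Delta p A v * Delta p A w :=
  map_mul (deltaHom p) v w

lemma delta_inv (v : ZMod p → A) : Delta p A v⁻¹ = (Delta p A v)⁻¹ :=
  map_inv (deltaHom p) v

lemma deltaPow_apply (n : ℕ) (v : ZMod p → A) : deltaPow p n v = (Delta p A)^[n] v := rfl

lemma delta_deltaPow (n : ℕ) (v : ZMod p → A) :
    Delta p A (deltaPow p n v) = deltaPow p (n + 1) v :=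
  (Function.iterate_succ_apply' _ n v).symm

lemma delta_mem_range_deltaPow_succ {n : ℕ} {v : ZMod p → A} (hv : v ∈ (deltaPow p n).range) :
    Delta p A v ∈ (deltaPow p (n + 1)).range := by
  obtain ⟨u, rfl⟩ := hv
  exact ⟨u, (delta_deltaPow p n u).symm⟩

lemma range_deltaPow_antitone {m n : ℕ} (h : n ≤ m) :
    (deltaPow p (A := A) m).range ≤ (deltaPow p n).range := by
  rintro _ ⟨u, rfl⟩
  obtain ⟨k, rfl⟩ := Nat.exists_eq_add_of_le h
  exact ⟨deltaPow p k u, (Function.iterate_add_apply _ n k u).symm⟩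

lemma commutator_inlW (g : ZMod p → A) (y : W p A) :
    ⁅inlW p A g, y⁆ = inlW p A (g * (shiftAut p A y.right g)⁻¹) := by
  ext i
  · simp [commutatorElement_def, inlW, shiftAut_apply, mul_right_comm _ _ (y.left _)⁻¹]
  · simp [commutatorElement_def, inlW]

lemma shiftAut_mem_range_deltaPow {n : ℕ} {g : ZMod p → A} (hg : g ∈ (deltaPow p n).range)
    (k : Multiplicative (ZMod p)) : shiftAut p A k g ∈ (deltaPow p n).range := by
  obtain ⟨u, rfl⟩ := hg
  exact ⟨shiftAut p A k u, Function.Commute.iterate_left (delta_shiftAut p k) n u⟩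

variable [NeZero p]

lemma mul_inv_shiftAut_mem_range_deltaPow_succ {n : ℕ} {g : ZMod p → A}
    (hg : g ∈ (deltaPow p n).range) (k : Multiplicative (ZMod p)) :
    g * (shiftAut p A k g)⁻¹ ∈ (deltaPow p (n + 1)).range := by
  have hdelta := delta_mem_range_deltaPow_succ p hg
  have hnat (m : ℕ) : g * (shiftAut p A (.ofAdd m) g)⁻¹ ∈ (deltaPow p (n + 1)).range := by
    induction m with
    | zero => simp
    | succ m ih =>
      convert mul_mem ih (shiftAut_mem_range_deltaPow p hdelta (.ofAdd (m + 1))) using 1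
      funext i
      simp only [Pi.mul_apply, Pi.inv_apply, shiftAut_apply, delta_apply, toAdd_ofAdd]
      rw [Nat.cast_succ, ← add_assoc, add_sub_cancel_right, mul_assoc, inv_mul_cancel_comm_assoc]
  simpa using hnat k.toAdd.val

lemma gammaStar_eq_map_range (n : ℕ) :
    gammaStar p A n = (deltaPow p n).range.map (inlW p A) := by
  induction n with
  | zero =>
    rw [MonoidHom.range_eq_top.mpr fun v => ⟨v, rfl⟩, ← MonoidHom.range_eq_map]
    rfl
  | succ n ih =>
    apply le_antisymm
    · rw [gammaStar, ih, Subgroup.commutator_le]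
      rintro _ ⟨g, hg, rfl⟩ y -
      rw [commutator_inlW]
      exact Subgroup.mem_map_of_mem _ (mul_inv_shiftAut_mem_range_deltaPow_succ p hg _)
    · rintro _ ⟨_, ⟨u, rfl⟩, rfl⟩
      rw [deltaPow_apply, Function.iterate_succ_apply', inlW_delta]
      exact Subgroup.commutator_mem_commutator (inv_mem (ih ▸ ⟨_, ⟨u, rfl⟩, rfl⟩)) trivial

lemma inlW_mem_gammaStar_iff (n : ℕ) (v : ZMod p → A) :
    inlW p A v ∈ gammaStar p A n ↔ v ∈ (deltaPow p n).range := by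
  rw [gammaStar_eq_map_range]
  exact Subgroup.mem_map_iff_mem SemidirectProduct.inl_injective

end CommGroup

section ExponentP

open Polynomial

variable {M : Type*} [AddCommGroup M] [Module (ZMod p) M]

def shiftLin : Module.End (ZMod p) (ZMod p → M) := LinearMap.funLeft (ZMod p) M (· - 1)

lemma shiftLin_apply (v : ZMod p → M) (i : ZMod p) : shiftLin p v i = v (i - 1) := rfl

lemma shiftLin_pow_apply (k : ℕ) (v : ZMod p → M) (i : ZMod p) :
    (shiftLin p ^ k) v i = v (i - k) := by
  induction k generalizing i with
  | zero => simp
  | succ k ih =>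
    rw [pow_succ', Module.End.mul_apply, shiftLin_apply, ih, Nat.cast_succ, sub_add_eq_sub_sub,
      sub_right_comm]

lemma delta_ofAdd (v : ZMod p → M) :
    Delta p (Multiplicative M) (Multiplicative.ofAdd ∘ v) =
      Multiplicative.ofAdd ∘ (shiftLin p - 1 : Module.End (ZMod p) (ZMod p → M)) v := by
  funext i
  simp [delta_apply, shiftLin_apply, inv_mul_eq_div]

lemma delta_iterate_ofAdd (n : ℕ) (v : ZMod p → M) :
    (Delta p (Multiplicative M))^[n] (Multiplicative.ofAdd ∘ v) =
      Multiplicative.ofAdd ∘ ((shiftLin p - 1 : Module.End (ZMod p) (ZMod p → M)) ^ n) v := by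
  induction n with
  | zero => rfl
  | succ n ih =>
    rw [Function.iterate_succ_apply', ih, delta_ofAdd, pow_succ', Module.End.mul_apply]

variable [Fact p.Prime]

lemma X_sub_one_pow_pred : (X - 1 : (ZMod p)[X]) ^ (p - 1) = ∑ k ∈ Finset.range p, X ^ k := by
  have hX : (X - 1 : (ZMod p)[X]) ≠ 0 := by simpa using X_sub_C_ne_zero (1 : ZMod p)
  apply mul_right_cancel₀ hX
  rw [← pow_succ, Nat.sub_add_cancel (Fact.out : p.Prime).one_le, sub_pow_char, one_pow,
    geom_sum_mul]

lemma shiftLin_sub_one_pow_pred :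
    (shiftLin p - 1 : Module.End (ZMod p) (ZMod p → M)) ^ (p - 1) =
      ∑ k ∈ Finset.range p, shiftLin p ^ k := by
  simpa using congrArg (aeval (shiftLin p (M := M))) (X_sub_one_pow_pred p)

lemma shiftLin_sub_one_pow_pred_single (m : M) :
    ((shiftLin p - 1 : Module.End (ZMod p) (ZMod p → M)) ^ (p - 1)) (Pi.single 0 m) =
      fun _ => m := by
  funext i
  rw [shiftLin_sub_one_pow_pred, LinearMap.sum_apply, Finset.sum_apply,
    Finset.sum_eq_single i.val]
  · simp [shiftLin_pow_apply]
  · intro k hk hki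
    rw [shiftLin_pow_apply, Pi.single_apply, if_neg (sub_ne_zero.mpr ?_)]
    rintro rfl
    exact hki (ZMod.val_cast_of_lt (Finset.mem_range.mp hk)).symm
  · simp [ZMod.val_lt]

variable {A : Type*} [CommGroup A]

lemma const_mem_range_deltaPow_pred (hA : ∀ a : A, a ^ p = 1) (a : A) :
    (fun _ => a) ∈ (deltaPow p (p - 1)).range := by
  obtain ⟨χ, hχ⟩ := exists_monoidHom_ofAdd_one_eq p (hA a)
  refine ⟨χ ∘ Multiplicative.ofAdd ∘ Pi.single 0 1, ?_⟩
  rw [deltaPow_apply, delta_iterate_map, delta_iterate_ofAdd, shiftLin_sub_one_pow_pred_single]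
  funext
  simp [hχ]

lemma mem_range_deltaPow_of_delta_mem (hA : ∀ a : A, a ^ p = 1) {n : ℕ} (hn : n ≤ p - 1)
    {u : ZMod p → A} (h : Delta p A u ∈ (deltaPow p (n + 1)).range) :
    u ∈ (deltaPow p n).range := by
  obtain ⟨t, ht⟩ := h
  have hker : Delta p A (u * (deltaPow p n t)⁻¹) = 1 := by
    rw [delta_mul, delta_inv, delta_deltaPow, ht, mul_inv_cancel]
  have hc : u * (deltaPow p n t)⁻¹ ∈ (deltaPow p n).range := by
    rw [eq_const_of_delta_eq_one p hker]
    exact range_deltaPow_antitone p hn (const_mem_range_deltaPow_pred p hA _)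
  simpa using mul_mem hc ((deltaPow p n).mem_range.mpr ⟨t, rfl⟩)

end ExponentP

end GGS

theorem statement10_general (p : ℕ) [Fact p.Prime]
    (A : Type*) [CommGroup A] (hA : ∀ a : A, a ^ p = 1)
    (i : ℕ) (hi1 : 1 ≤ i) (hip : i ≤ p - 1) :
    (∀ v : ZMod p → A, inlW p A v ∈ gammaStar p A (i - 1) →
      inlW p A (Delta p A v) ∈ gammaStar p A i)
    ∧ (∀ v w : ZMod p → A,
        inlW p A v ∈ gammaStar p A (i - 1) → inlW p A w ∈ gammaStar p A (i - 1) →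
        (inlW p A (v⁻¹ * w) ∈ gammaStar p A i ↔
          inlW p A ((Delta p A v)⁻¹ * Delta p A w) ∈ gammaStar p A (i + 1)))
    ∧ (∀ v w : ZMod p → A,
        inlW p A v ∈ gammaStar p A (i - 1) → inlW p A w ∈ gammaStar p A (i - 1) →
        inlW p A (Delta p A (v * w) * (Delta p A v * Delta p A w)⁻¹) ∈ gammaStar p A (i + 1))
    ∧ (∀ x : W p A, x ∈ gammaStar p A i →
        ∃ v : ZMod p → A, inlW p A v ∈ gammaStar p A (i - 1) ∧
          x * (inlW p A (Delta p A v))⁻¹ ∈ gammaStar p A (i + 1)) := by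
  obtain ⟨j, rfl⟩ : ∃ j, i = j + 1 := ⟨i - 1, by omega⟩
  simp only [add_tsub_cancel_right, inlW_mem_gammaStar_iff]
  refine ⟨fun _ => delta_mem_range_deltaPow_succ p, fun _ _ _ _ => ?_, fun _ _ _ _ => ?_,
    fun _ hx => ?_⟩
  · rw [← delta_inv, ← delta_mul]
    exact ⟨delta_mem_range_deltaPow_succ p, mem_range_deltaPow_of_delta_mem p hA hip⟩
  · rw [delta_mul, mul_inv_cancel]
    exact one_mem _
  · rw [gammaStar_eq_map_range] at hx
    obtain ⟨_, ⟨u, rfl⟩, rfl⟩ := hx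
    refine ⟨deltaPow p j u, ⟨u, rfl⟩, ?_⟩
    rw [delta_deltaPow, mul_inv_cancel]
    exact one_mem _

/-- For an elementary abelian finite p-group A and 1 ≤ i ≤ p−1, the map
    γ_i*(W(A))/γ_{i+1}*(W(A)) → γ_{i+1}*(W(A))/γ_{i+2}*(W(A)) induced by Δ is a
    well-defined group isomorphism: Δ maps γ_i*(W(A)) into γ_{i+1}*(W(A)), two elements of
    γ_i*(W(A)) are congruent mod γ_{i+1}*(W(A)) iff their Δ-images are congruent mod
    γ_{i+2}*(W(A)) (well-definedness and injectivity), Δ is a homomorphism modulo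
    γ_{i+2}*(W(A)), and every coset of γ_{i+1}*(W(A))/γ_{i+2}*(W(A)) is hit (surjectivity).
    (γ_i*(W(A)) = `gammaStar p A (i-1)`.) -/
theorem statement10 (p : ℕ) [Fact p.Prime] (hp : Odd p)
    (A : Type*) [CommGroup A] [Fintype A] (hA : ∀ a : A, a ^ p = 1)
    (i : ℕ) (hi1 : 1 ≤ i) (hip : i ≤ p - 1) :
    (∀ v : ZMod p → A, inlW p A v ∈ gammaStar p A (i - 1) →
      inlW p A (Delta p A v) ∈ gammaStar p A i)
    ∧ (∀ v w : ZMod p → A,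
        inlW p A v ∈ gammaStar p A (i - 1) → inlW p A w ∈ gammaStar p A (i - 1) →
        (inlW p A (v⁻¹ * w) ∈ gammaStar p A i ↔
          inlW p A ((Delta p A v)⁻¹ * Delta p A w) ∈ gammaStar p A (i + 1)))
    ∧ (∀ v w : ZMod p → A,
        inlW p A v ∈ gammaStar p A (i - 1) → inlW p A w ∈ gammaStar p A (i - 1) →
        inlW p A (Delta p A (v * w) * (Delta p A v * Delta p A w)⁻¹) ∈ gammaStar p A (i + 1))
    ∧ (∀ x : W p A, x ∈ gammaStar p A i →
        ∃ v : ZMod p → A, inlW p A v ∈ gammaStar p A (i - 1) ∧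
          x * (inlW p A (Delta p A v))⁻¹ ∈ gammaStar p A (i + 1)) :=
  statement10_general p A hA i hi1 hip
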